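/- arXiv:2405.15834 — 2 statements merged into one kernel-verified Lean document; each statement's English description precedes it below -/
import Mathlib

section
/- Let (ν_t, μ_t)_{t≥0} be the solution of the Fisher-Rao gradient flow system ∂_t ν_t = −a(ν_t,μ_t,·)ν_t, ∂_t μ_t = b(ν_t,μ_t,·)μ_t with initial condition (ν₀,μ₀) satisfying sup_x ν₀(x)/π(x) ≤ R_ν and sup_y μ₀(y)/ρ(y) ≤ R_μ for constants R_ν, R_μ > 1, under the boundedness assumptions |δF/δν| ≤ C_ν, |δF/δμ| ≤ C_μ and bounded second-order flat derivatives. Then for all t > 0: D_KL(ν_t|π) ≤ 2·log R_ν + (4/σ²)·C_ν and D_KL(μ_t|ρ) ≤ 2·log R_μ + (4/σ²)·C_μ. -/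
open MeasureTheory Real Set

noncomputable section

abbrev Euc (d : ℕ) : Type := EuclideanSpace ℝ (Fin d)

/-- `f` is a probability density on `X ⊆ ℝ^d` (w.r.t. Lebesgue measure). -/
def IsPD {d : ℕ} (X : Set (Euc d)) (f : Euc d → ℝ) : Prop :=
  (∀ x, 0 ≤ f x) ∧ MeasureTheory.IntegrableOn f X ∧ (∫ x in X, f x) = 1

/-- Relative entropy `D_KL(f‖g)` of densities on `X`. -/
def KL {d : ℕ} (X : Set (Euc d)) (f g : Euc d → ℝ) : ℝ :=
  ∫ x in X, Real.log (f x / g x) * f x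

/-- Total variation distance between densities on `X`. -/
def TVd {d : ℕ} (X : Set (Euc d)) (f g : Euc d → ℝ) : ℝ :=
  (1 / 2) * ∫ x in X, |f x - g x|

/-- The entropy-regularized payoff `V^σ`. -/
def Vsig {d : ℕ} (X Y : Set (Euc d)) (σ : ℝ) (pp ρ : Euc d → ℝ)
    (F : (Euc d → ℝ) → (Euc d → ℝ) → ℝ) (ν μ : Euc d → ℝ) : ℝ :=
  F ν μ + σ ^ 2 / 2 * (KL X ν pp - KL Y μ ρ)

/-- `a(ν,μ,x) = δF/δν(ν,μ,x) + (σ²/2) log(ν(x)/pp(x)) − (σ²/2) D_KL(ν|pp)`. -/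
def aFun {d : ℕ} (X : Set (Euc d)) (σ : ℝ) (pp : Euc d → ℝ)
    (DFν : (Euc d → ℝ) → (Euc d → ℝ) → Euc d → ℝ)
    (ν μ : Euc d → ℝ) (x : Euc d) : ℝ :=
  DFν ν μ x + σ ^ 2 / 2 * Real.log (ν x / pp x) - σ ^ 2 / 2 * KL X ν pp

/-- `b(ν,μ,y) = δF/δμ(ν,μ,y) − (σ²/2) log(μ(y)/ρ(y)) + (σ²/2) D_KL(μ|ρ)`. -/
def bFun {d : ℕ} (Y : Set (Euc d)) (σ : ℝ) (ρ : Euc d → ℝ)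
    (DFμ : (Euc d → ℝ) → (Euc d → ℝ) → Euc d → ℝ)
    (ν μ : Euc d → ℝ) (y : Euc d) : ℝ :=
  DFμ ν μ y - σ ^ 2 / 2 * Real.log (μ y / ρ y) + σ ^ 2 / 2 * KL Y μ ρ

/-- `DFν` is the (normalized) flat derivative of `F` in its first argument. -/
def IsFlatDerivNu {d : ℕ} (X Y : Set (Euc d))
    (F : (Euc d → ℝ) → (Euc d → ℝ) → ℝ)
    (DFν : (Euc d → ℝ) → (Euc d → ℝ) → Euc d → ℝ) : Prop :=
  (∀ ν ν' μ, IsPD X ν → IsPD X ν' → IsPD Y μ →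
    F ν' μ - F ν μ =
      ∫ ε in (0:ℝ)..1, ∫ x in X,
        DFν (fun z => ν z + ε * (ν' z - ν z)) μ x * (ν' x - ν x)) ∧
  (∀ ν μ, IsPD X ν → IsPD Y μ → (∫ x in X, DFν ν μ x * ν x) = 0)

/-- `DFμ` is the (normalized) flat derivative of `F` in its second argument. -/
def IsFlatDerivMu {d : ℕ} (X Y : Set (Euc d))
    (F : (Euc d → ℝ) → (Euc d → ℝ) → ℝ)
    (DFμ : (Euc d → ℝ) → (Euc d → ℝ) → Euc d → ℝ) : Prop :=
  (∀ ν μ μ', IsPD X ν → IsPD Y μ → IsPD Y μ' →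
    F ν μ' - F ν μ =
      ∫ ε in (0:ℝ)..1, ∫ y in Y,
        DFμ ν (fun z => μ z + ε * (μ' z - μ z)) y * (μ' y - μ y)) ∧
  (∀ ν μ, IsPD X ν → IsPD Y μ → (∫ y in Y, DFμ ν μ y * μ y) = 0)

/-- The four second-order flat derivatives of `F`, given first-order flat
derivatives `DFν`, `DFμ`: each satisfies the defining first-order expansion. -/
def IsSecondFlatDeriv {d : ℕ} (X Y : Set (Euc d))
    (DFν DFμ : (Euc d → ℝ) → (Euc d → ℝ) → Euc d → ℝ)
    (D2νν D2μν D2μμ D2νμ : (Euc d → ℝ) → (Euc d → ℝ) → Euc d → Euc d → ℝ) : Prop :=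
  (∀ ν ν' μ, IsPD X ν → IsPD X ν' → IsPD Y μ → ∀ x,
    DFν ν' μ x - DFν ν μ x =
      ∫ ε in (0:ℝ)..1, ∫ z in X,
        D2νν (fun w => ν w + ε * (ν' w - ν w)) μ x z * (ν' z - ν z)) ∧
  (∀ ν μ μ', IsPD X ν → IsPD Y μ → IsPD Y μ' → ∀ x,
    DFν ν μ' x - DFν ν μ x =
      ∫ ε in (0:ℝ)..1, ∫ w in Y,
        D2μν ν (fun z => μ z + ε * (μ' z - μ z)) x w * (μ' w - μ w)) ∧
  (∀ ν μ μ', IsPD X ν → IsPD Y μ → IsPD Y μ' → ∀ y,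
    DFμ ν μ' y - DFμ ν μ y =
      ∫ ε in (0:ℝ)..1, ∫ w in Y,
        D2μμ ν (fun z => μ z + ε * (μ' z - μ z)) y w * (μ' w - μ w)) ∧
  (∀ ν ν' μ, IsPD X ν → IsPD X ν' → IsPD Y μ → ∀ y,
    DFμ ν' μ y - DFμ ν μ y =
      ∫ ε in (0:ℝ)..1, ∫ z in X,
        D2νμ (fun w => ν w + ε * (ν' w - ν w)) μ y z * (ν' z - ν z))

/-- Uniform bounds on the four second-order flat derivatives. -/
def SecondDerivBounded {d : ℕ} (X Y : Set (Euc d))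
    (D2νν D2μν D2μμ D2νμ : (Euc d → ℝ) → (Euc d → ℝ) → Euc d → Euc d → ℝ)
    (Cνν Cμν Cμμ Cνμ : ℝ) : Prop :=
  ∀ ν μ, IsPD X ν → IsPD Y μ →
    (∀ x ∈ X, ∀ z ∈ X, |D2νν ν μ x z| ≤ Cνν) ∧
    (∀ x ∈ X, ∀ w ∈ Y, |D2μν ν μ x w| ≤ Cμν) ∧
    (∀ y ∈ Y, ∀ w ∈ Y, |D2μμ ν μ y w| ≤ Cμμ) ∧
    (∀ y ∈ Y, ∀ z ∈ X, |D2νμ ν μ y z| ≤ Cνμ)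

/-- Uniform bounds on the first-order flat derivatives. -/
def FirstDerivBounded {d : ℕ} (X Y : Set (Euc d))
    (DFν DFμ : (Euc d → ℝ) → (Euc d → ℝ) → Euc d → ℝ) (Cν Cμ : ℝ) : Prop :=
  ∀ ν μ, IsPD X ν → IsPD Y μ →
    (∀ x ∈ X, |DFν ν μ x| ≤ Cν) ∧ (∀ y ∈ Y, |DFμ ν μ y| ≤ Cμ)

/-- `(ν, μ)` is a (time-differentiable) solution of the Fisher–Rao gradient
flow system `∂_t ν_t = −a(ν_t,μ_t,·) ν_t`, `∂_t μ_t = b(ν_t,μ_t,·) μ_t`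
with initial condition `(ν₀, μ₀)`. -/
def IsFRFlow {d : ℕ} (X Y : Set (Euc d)) (σ : ℝ) (pp ρ : Euc d → ℝ)
    (DFν DFμ : (Euc d → ℝ) → (Euc d → ℝ) → Euc d → ℝ)
    (ν₀ μ₀ : Euc d → ℝ) (ν μ : ℝ → Euc d → ℝ) : Prop :=
  ν 0 = ν₀ ∧ μ 0 = μ₀ ∧
  (∀ t, 0 ≤ t → IsPD X (ν t) ∧ IsPD Y (μ t)) ∧
  (∀ x, ContinuousOn (fun s => ν s x) (Ici 0)) ∧
  (∀ y, ContinuousOn (fun s => μ s y) (Ici 0)) ∧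
  (∀ x t, 0 ≤ t → HasDerivWithinAt (fun s => ν s x)
      (-(aFun X σ pp DFν (ν t) (μ t) x) * ν t x) (Ici 0) t) ∧
  (∀ y t, 0 ≤ t → HasDerivWithinAt (fun s => μ s y)
      ((bFun Y σ ρ DFμ (ν t) (μ t) y) * μ t y) (Ici 0) t)

/-- The Nikaidò–Isoda error for the game `V^σ`. -/
def NIerr {d : ℕ} (X Y : Set (Euc d)) (σ : ℝ) (pp ρ : Euc d → ℝ)
    (F : (Euc d → ℝ) → (Euc d → ℝ) → ℝ) (ν μ : Euc d → ℝ) : ℝ :=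
  sSup {r : ℝ | ∃ μ', IsPD Y μ' ∧ r = Vsig X Y σ pp ρ F ν μ'} -
    sInf {r : ℝ | ∃ ν', IsPD X ν' ∧ r = Vsig X Y σ pp ρ F ν' μ}

/-- Transfer of pointwise facts on `X` (with a.e.-matching measurable data) to
a.e. facts for `volume.restrict X`, valid for arbitrary (non-measurable) `X`. -/
lemma ae_restrict_of_forall_mem_matching {α : Type*} [MeasurableSpace α] {μ : Measure α}
    (X : Set α) {Q : α → Prop} (hQ : MeasurableSet {x | Q x})
    {f₁ g₁ f₂ g₂ f₃ g₃ : α → ℝ}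
    (h1 : f₁ =ᵐ[μ.restrict X] g₁) (h2 : f₂ =ᵐ[μ.restrict X] g₂)
    (h3 : f₃ =ᵐ[μ.restrict X] g₃)
    (h : ∀ x ∈ X, f₁ x = g₁ x → f₂ x = g₂ x → f₃ x = g₃ x → Q x) :
    ∀ᵐ x ∂(μ.restrict X), Q x := by
  rw [ae_iff]
  have hQc : MeasurableSet {x | ¬ Q x} := hQ.compl
  rw [Measure.restrict_apply hQc]
  set N : Set α := {x | f₁ x ≠ g₁ x} ∪ {x | f₂ x ≠ g₂ x} ∪ {x | f₃ x ≠ g₃ x} with hN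
  have hNnull : μ.restrict X N = 0 := by
    have e1 : μ.restrict X {x | f₁ x ≠ g₁ x} = 0 := by
      have := h1; rw [Filter.EventuallyEq, ae_iff] at this; exact this
    have e2 : μ.restrict X {x | f₂ x ≠ g₂ x} = 0 := by
      have := h2; rw [Filter.EventuallyEq, ae_iff] at this; exact this
    have e3 : μ.restrict X {x | f₃ x ≠ g₃ x} = 0 := by
      have := h3; rw [Filter.EventuallyEq, ae_iff] at this; exact this
    refine le_antisymm ?_ zero_le
    calc μ.restrict X N ≤ μ.restrict X ({x | f₁ x ≠ g₁ x} ∪ {x | f₂ x ≠ g₂ x})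
        + μ.restrict X {x | f₃ x ≠ g₃ x} := measure_union_le _ _
      _ ≤ (μ.restrict X {x | f₁ x ≠ g₁ x} + μ.restrict X {x | f₂ x ≠ g₂ x})
        + μ.restrict X {x | f₃ x ≠ g₃ x} := by
          gcongr; exact measure_union_le _ _
      _ = 0 := by rw [e1, e2, e3]; simp
  have hsub : {x | ¬ Q x} ∩ X ⊆ N ∩ X := by
    intro x hx
    refine ⟨?_, hx.2⟩
    by_contra hxN
    simp only [hN, Set.mem_union, Set.mem_setOf_eq, not_or, not_not] at hxN
    exact hx.1 (h x hx.2 hxN.1.1 hxN.1.2 hxN.2)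
  refine le_antisymm ?_ zero_le
  calc μ ({x | ¬ Q x} ∩ X) ≤ μ (N ∩ X) := measure_mono hsub
    _ ≤ μ.restrict X N := Measure.le_restrict_apply _ _
    _ = 0 := hNnull

lemma KL_ge_neg_one {d : ℕ} (X : Set (Euc d)) (f g : Euc d → ℝ)
    (hf : IsPD X f) (hg : IsPD X g) : -1 ≤ KL X f g := by
  classical
  by_cases hint : Integrable (fun x => Real.log (f x / g x) * f x) (volume.restrict X)
  · -- use minorant
    have hfi : Integrable f (volume.restrict X) := hf.2.1
    have hgi : Integrable g (volume.restrict X) := hg.2.1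
    set g' : Euc d → ℝ := hgi.aestronglyMeasurable.mk g with hg'
    have hg'meas : StronglyMeasurable g' := hgi.aestronglyMeasurable.stronglyMeasurable_mk
    have hg'ae : g =ᵐ[volume.restrict X] g' := hgi.aestronglyMeasurable.ae_eq_mk
    set f' : Euc d → ℝ := hfi.aestronglyMeasurable.mk f with hf'
    have hf'meas : StronglyMeasurable f' := hfi.aestronglyMeasurable.stronglyMeasurable_mk
    have hf'ae : f =ᵐ[volume.restrict X] f' := hfi.aestronglyMeasurable.ae_eq_mk
    set A : Set (Euc d) := {x | 0 < g' x} with hA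
    have hAmeas : MeasurableSet A := by
      exact measurableSet_lt measurable_const hg'meas.measurable
    set φ : Euc d → ℝ := A.indicator (fun x => f x - g x) with hφ
    have hφint : Integrable φ (volume.restrict X) := (hfi.sub hgi).indicator hAmeas
    have hae : φ ≤ᵐ[volume.restrict X] fun x => Real.log (f x / g x) * f x := by
      have key : ∀ x ∈ X, f x = f' x → g x = g' x → f x = f' x →
          A.indicator (fun y => f' y - g' y) x ≤ Real.log (f' x / g' x) * f' x := by
        intro x hx hfx hgx _
        by_cases hxA : x ∈ A
        · have hgpos : 0 < g x := by rw [hgx]; exact hxA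
          rw [Set.indicator_of_mem hxA, ← hfx, ← hgx]
          rcases lt_or_ge 0 (f x) with hfpos | hfle
          · have h1 : Real.log (g x / f x) ≤ g x / f x - 1 :=
              Real.log_le_sub_one_of_pos (div_pos hgpos hfpos)
            have h2 : Real.log (g x / f x) = - Real.log (f x / g x) := by
              rw [← Real.log_inv]; congr 1; field_simp
            have h3 : 1 - g x / f x ≤ Real.log (f x / g x) := by
              rw [h2] at h1; linarith
            have h4 : (1 - g x / f x) * f x ≤ Real.log (f x / g x) * f x :=
              mul_le_mul_of_nonneg_right h3 (le_of_lt hfpos)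
            have h5 : (1 - g x / f x) * f x = f x - g x := by
              field_simp
            linarith
          · have hf0 : f x = 0 := le_antisymm hfle (hf.1 x)
            rw [hf0]; simp; linarith
        · rw [Set.indicator_of_notMem hxA, ← hfx, ← hgx]
          have hg0 : g x = 0 := by
            have : ¬ (0 < g' x) := hxA
            have := le_antisymm (by rw [hgx]; linarith [not_lt.mp this]) (hg.1 x)
            exact this
          rcases eq_or_lt_of_le (hf.1 x) with hf0 | hfpos
          · rw [← hf0, hg0]; simp
          · rw [hg0]; simp
      have := ae_restrict_of_forall_mem_matching (μ := volume) X
        (Q := fun x => A.indicator (fun y => f' y - g' y) x ≤ Real.log (f' x / g' x) * f' x)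
        ?_ hf'ae hg'ae hf'ae key
      · filter_upwards [this, hf'ae, hg'ae] with x hQ hfx hgx
        rw [hφ]
        have : A.indicator (fun y => f y - g y) x = A.indicator (fun y => f' y - g' y) x := by
          by_cases hxA : x ∈ A
          · rw [Set.indicator_of_mem hxA, Set.indicator_of_mem hxA, hfx, hgx]
          · rw [Set.indicator_of_notMem hxA, Set.indicator_of_notMem hxA]
        rw [this, hfx, hgx]
        exact hQ
      · apply measurableSet_le
        · exact ((hf'meas.measurable.sub hg'meas.measurable).indicator hAmeas)
        · exact ((hf'meas.measurable.div hg'meas.measurable).log.mul hf'meas.measurable)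
    have hKL : ∫ x in X, φ x ≤ KL X f g := integral_mono_ae hφint hint hae
    have hφval : -1 ≤ ∫ x in X, φ x := by
      have hsplit : φ = fun x => A.indicator f x - A.indicator g x := by
        funext x
        by_cases hxA : x ∈ A
        · simp [hφ, Set.indicator_of_mem hxA]
        · simp [hφ, Set.indicator_of_notMem hxA]
      rw [hsplit, integral_sub (hfi.indicator hAmeas) (hgi.indicator hAmeas)]
      have h1 : 0 ≤ ∫ x in X, A.indicator f x :=
        integral_nonneg fun x => Set.indicator_nonneg (fun y _ => hf.1 y) x
      have h2 : ∫ x in X, A.indicator g x ≤ 1 := by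
        have := integral_mono (hgi.indicator hAmeas) hgi
          (fun x => Set.indicator_le_self' (fun y _ => hg.1 y) x)
        rw [hg.2.2] at this; exact this
      linarith
    linarith
  · rw [KL, integral_undef hint]; norm_num

lemma main_aux {d : ℕ} (X : Set (Euc d)) (pp : Euc d → ℝ) (hpp : IsPD X pp)
    (lam C R : ℝ) (hlam : 0 < lam) (hC : 0 < C) (hR : 1 < R)
    (w c : ℝ → Euc d → ℝ)
    (hw0 : ∀ x ∈ X, w 0 x ≤ R * pp x)
    (hPD : ∀ t, 0 ≤ t → IsPD X (w t))
    (hcont : ∀ x, ContinuousOn (fun s => w s x) (Ici 0))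
    (hderiv : ∀ x t, 0 ≤ t → HasDerivWithinAt (fun s => w s x)
      ((c t x - lam * Real.log (w t x / pp x) + lam * KL X (w t) pp) * w t x) (Ici 0) t)
    (hc : ∀ t, 0 ≤ t → ∀ x ∈ X, |c t x| ≤ C) :
    ∀ t, 0 ≤ t → KL X (w t) pp ≤ 2 * Real.log R + 2 * (C / lam) := by
  have hR0 : (0:ℝ) < R := lt_trans one_pos hR
  have hlne : lam ≠ 0 := ne_of_gt hlam
  have hlogR : 0 < Real.log R := Real.log_pos hR
  have hK1 : ∀ s, 0 ≤ s → -1 ≤ KL X (w s) pp := fun s hs =>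
    KL_ge_neg_one X (w s) pp (hPD s hs) hpp
  -- Step 1: positivity is preserved
  have hpos : ∀ y ∈ X, 0 < pp y → 0 < w 0 y → ∀ t, 0 ≤ t → 0 < w t y := by
    intro y hy hppy hw0y t ht
    set κ := C + lam + 1 with hκ
    have hκ0 : 0 < κ := by positivity
    set L := Real.log (w 0 y / pp y) with hL
    set γ : ℝ → ℝ := fun s => (Real.exp (-(lam*s)) * (lam*L + κ) - κ)/lam with hγ
    have hγd : ∀ s : ℝ, HasDerivAt γ (-κ - lam * γ s) s := by
      intro s
      have h1 : HasDerivAt (fun s : ℝ => -(lam * s)) (-lam) s := by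
        have := ((hasDerivAt_id' s).const_mul lam).neg; rw [mul_one] at this; exact this
      have h2 : HasDerivAt (fun s : ℝ => Real.exp (-(lam*s)))
          (Real.exp (-(lam*s)) * (-lam)) s := h1.exp
      have h3 : HasDerivAt γ ((Real.exp (-(lam*s)) * (-lam)) * (lam*L + κ) / lam) s := by
        simpa [hγ, mul_comm] using ((h2.mul_const (lam*L + κ)).sub_const κ).div_const lam
      convert h3 using 1
      rw [hγ]
      field_simp
      ring
    set ψ : ℝ → ℝ := fun s => pp y * Real.exp (γ s) with hψ
    have hψpos : ∀ s, 0 < ψ s := fun s => mul_pos hppy (Real.exp_pos _)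
    have hψd : ∀ s : ℝ, HasDerivAt ψ (ψ s * (-κ - lam * γ s)) s := by
      intro s
      have := ((hγd s).exp).const_mul (pp y)
      exact this.congr_deriv (by simp only [hψ]; ring)
    have hcomp : ∀ s ∈ Icc (0:ℝ) t, ψ s ≤ w s y := by
      apply image_le_of_deriv_right_lt_deriv_boundary'
        (f := ψ) (f' := fun s => ψ s * (-κ - lam * γ s))
        (B := fun s => w s y)
        (B' := fun s => (c s y - lam * Real.log (w s y / pp y) + lam * KL X (w s) pp) * w s y)
      · exact fun s _ => (hψd s).continuousAt.continuousWithinAt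
      · exact fun s _ => (hψd s).hasDerivWithinAt
      · -- ψ 0 ≤ w 0 y
        have hγ0 : γ 0 = L := by
          simp only [hγ]
          rw [mul_zero, neg_zero, Real.exp_zero, one_mul]
          field_simp; ring
        -- next: ψ 0 = w 0 y
        have h0 : ψ 0 = w 0 y := by
          rw [hψ]
          simp only [hγ0, hL]
          rw [Real.exp_log (div_pos hw0y hppy)]
          field_simp
        rw [h0]
      · exact (hcont y).mono (Icc_subset_Ici_self)
      · intro s hs
        exact (hderiv y s hs.1).mono (Ici_subset_Ici.2 hs.1)
      · -- contact point comparison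
        intro s hs heq
        have hs0 : (0:ℝ) ≤ s := hs.1
        have hws : w s y = pp y * Real.exp (γ s) := heq.symm
        have hlog : Real.log (w s y / pp y) = γ s := by
          rw [hws, mul_div_cancel_left₀ _ (ne_of_gt hppy), Real.log_exp]
        rw [hlog, ← heq]
        have hcy : -C ≤ c s y := (abs_le.mp (hc s hs0 y hy)).1
        have hKs : -1 ≤ KL X (w s) pp := hK1 s hs0
        have hKs' : lam * (-1) ≤ lam * KL X (w s) pp :=
          mul_le_mul_of_nonneg_left hKs (le_of_lt hlam)
        rw [mul_comm (c s y - lam * γ s + lam * KL X (w s) pp) (ψ s)]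
        apply mul_lt_mul_of_pos_left _ (hψpos s)
        simp only [hκ]
        have : lam * (-1) = -lam := by ring
        rw [this] at hKs'
        linarith
    have := hcomp t ⟨ht, le_refl t⟩
    exact lt_of_lt_of_le (hψpos t) this
  -- Step 2: upper barrier
  have hupb : ∀ x ∈ X, 0 < pp x → ∀ y ∈ X, 0 < pp y → 0 < w 0 y → ∀ ε, 0 < ε →
      ∀ t, 0 ≤ t → w t x ≤ (pp x / pp y) *
        (Real.exp ((2*C+ε)/lam + Real.exp (-(lam*t)) *
          (Real.log R - Real.log (w 0 y / pp y) - (2*C+ε)/lam)) * w t y) := by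
    intro x hx hppx y hy hppy hw0y ε hε t ht
    set be := (2*C+ε)/lam with hbe
    set a0 := Real.log R - Real.log (w 0 y / pp y) with ha0
    set α : ℝ → ℝ := fun s => be + Real.exp (-(lam*s)) * (a0 - be) with hα
    have hαd : ∀ s : ℝ, HasDerivAt α (2*C + ε - lam * α s) s := by
      intro s
      have h1 : HasDerivAt (fun s : ℝ => -(lam * s)) (-lam) s := by
        have := ((hasDerivAt_id' s).const_mul lam).neg; rw [mul_one] at this; exact this
      have h2 : HasDerivAt (fun s : ℝ => Real.exp (-(lam*s)))
          (Real.exp (-(lam*s)) * (-lam)) s := h1.exp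
      have h3 : HasDerivAt α ((Real.exp (-(lam*s)) * (-lam)) * (a0 - be)) s := by
        simpa [hα] using (h2.mul_const (a0 - be)).const_add be
      convert h3 using 1
      rw [hα, hbe]
      field_simp
      ring
    set B : ℝ → ℝ := fun s => (pp x / pp y) * (Real.exp (α s) * w s y) with hB
    have hcomp : ∀ s ∈ Icc (0:ℝ) t, w s x ≤ B s := by
      apply image_le_of_deriv_right_lt_deriv_boundary'
        (f := fun s => w s x)
        (f' := fun s => (c s x - lam * Real.log (w s x / pp x) + lam * KL X (w s) pp) * w s x)
        (B := B)
        (B' := fun s => (pp x / pp y) * ((Real.exp (α s) * (2*C + ε - lam * α s)) * w s y +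
          Real.exp (α s) *
            ((c s y - lam * Real.log (w s y / pp y) + lam * KL X (w s) pp) * w s y)))
      · exact (hcont x).mono (Icc_subset_Ici_self)
      · intro s hs
        exact (hderiv x s hs.1).mono (Ici_subset_Ici.2 hs.1)
      · -- initial condition
        have hα0 : α 0 = a0 := by
          simp only [hα]
          rw [mul_zero, neg_zero, Real.exp_zero, one_mul]
          ring
        have hBz : B 0 = R * pp x := by
          rw [hB]
          simp only [hα0, ha0]
          rw [Real.exp_sub, Real.exp_log hR0, Real.exp_log (div_pos hw0y hppy)]
          field_simp
        rw [hBz]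
        exact hw0 x hx
      · -- continuity of B
        apply ContinuousOn.mul continuousOn_const
        apply ContinuousOn.mul
        · exact fun s _ => ((hαd s).continuousAt.rexp).continuousWithinAt
        · exact (hcont y).mono (Icc_subset_Ici_self)
      · -- derivative of B
        intro s hs
        have hy' := (hderiv y s hs.1).mono (Ici_subset_Ici.2 hs.1)
        have he : HasDerivWithinAt (fun u => Real.exp (α u))
            (Real.exp (α s) * (2*C + ε - lam * α s)) (Ici s) s :=
          ((hαd s).exp).hasDerivWithinAt
        exact (he.mul hy').const_mul (pp x / pp y)
      · -- contact point
        intro s hs heq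
        have hs0 : (0:ℝ) ≤ s := hs.1
        have hwsy : 0 < w s y := hpos y hy hppy hw0y s hs0
        have hwx : w s x = (pp x / pp y) * (Real.exp (α s) * w s y) := heq
        have hlogx : Real.log (w s x / pp x) = α s + Real.log (w s y / pp y) := by
          have h1 : w s x / pp x = Real.exp (α s) * (w s y / pp y) := by
            rw [hwx]
            field_simp
          rw [h1, Real.log_mul (Real.exp_ne_zero _) (ne_of_gt (div_pos hwsy hppy)),
            Real.log_exp]
        have hQ : 0 < pp x / pp y * (Real.exp (α s) * w s y) :=
          mul_pos (div_pos hppx hppy) (mul_pos (Real.exp_pos _) hwsy)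
        have e1 : (c s x - lam * Real.log (w s x / pp x) + lam * KL X (w s) pp) * w s x
            = (pp x / pp y * (Real.exp (α s) * w s y)) *
              (c s x - lam * α s - lam * Real.log (w s y / pp y) + lam * KL X (w s) pp) := by
          rw [hlogx, hwx]; ring
        have e2 : (pp x / pp y) * ((Real.exp (α s) * (2*C + ε - lam * α s)) * w s y +
            Real.exp (α s) *
              ((c s y - lam * Real.log (w s y / pp y) + lam * KL X (w s) pp) * w s y))
            = (pp x / pp y * (Real.exp (α s) * w s y)) *
              (2*C + ε - lam * α s + c s y - lam * Real.log (w s y / pp y)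
                + lam * KL X (w s) pp) := by
          ring
        rw [e1, e2]
        apply mul_lt_mul_of_pos_left _ hQ
        have hcx : c s x ≤ C := (abs_le.mp (hc s hs0 x hx)).2
        have hcy : -C ≤ c s y := (abs_le.mp (hc s hs0 y hy)).1
        linarith
    exact hcomp t ⟨ht, le_refl t⟩
  -- Step 3: pointwise bound via normalization
  have hmain : ∀ t, 0 ≤ t → ∀ x ∈ X, 0 < pp x → w t x ≤ pp x * R * Real.exp (2*(C/lam)) := by
    intro t ht x hx hppx
    have hwtx0 : 0 ≤ w t x := (hPD t ht).1 x
    have hstep : ∀ ε, 0 < ε → w t x ≤ pp x * R * Real.exp ((2*C+ε)/lam) := by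
      intro ε hε
      set be := (2*C+ε)/lam with hbe
      have hbe0 : 0 ≤ be := div_nonneg (by linarith) hlam.le
      set c0 := w t x * Real.exp (-be) / (R * pp x) with hc0
      have hkey : ∀ y ∈ X, 0 < pp y → 0 < w 0 y → c0 * w 0 y ≤ w t y := by
        intro y hy hppy hw0y
        have hub := hupb x hx hppx y hy hppy hw0y ε hε t ht
        set a0 := Real.log R - Real.log (w 0 y / pp y) with ha0
        set θ := Real.exp (-(lam*t)) with hθ
        set αt := be + θ * (a0 - be) with hαt
        have hθ0 : 0 < θ := Real.exp_pos _
        have hθ1 : θ ≤ 1 := by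
          rw [hθ]
          exact le_trans (Real.exp_le_exp.2 (neg_nonpos.2 (mul_nonneg hlam.le ht)))
            (le_of_eq Real.exp_zero)
        have hz0 : 0 < w 0 y / (R * pp y) := div_pos hw0y (mul_pos hR0 hppy)
        have hz1 : w 0 y / (R * pp y) ≤ 1 := by
          rw [div_le_one (mul_pos hR0 hppy)]
          exact hw0 y hy
        have hlogz : Real.log (w 0 y / (R * pp y)) = -a0 := by
          rw [show w 0 y / (R * pp y) = (w 0 y / pp y) / R from by ring,
            Real.log_div (ne_of_gt (div_pos hw0y hppy)) (ne_of_gt hR0), ha0]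
          ring
        have ha0nn : 0 ≤ a0 := by
          have := Real.log_nonpos hz0.le hz1
          rw [hlogz] at this
          linarith
        have hexp : Real.exp (-be) * (w 0 y / (R * pp y)) ≤ Real.exp (-αt) := by
          rw [← Real.exp_log hz0, ← Real.exp_add]
          apply Real.exp_le_exp.2
          rw [hlogz]
          have h1 : θ * a0 ≤ a0 := by nlinarith
          have h2 : 0 ≤ θ * be := mul_nonneg hθ0.le hbe0
          have h3 : θ * (a0 - be) = θ * a0 - θ * be := by ring
          rw [hαt]
          linarith
        have e3 : c0 * w 0 y
            = (w t x / pp x) * pp y * (Real.exp (-be) * (w 0 y / (R * pp y))) := by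
          rw [hc0]
          field_simp
        have le1 : c0 * w 0 y ≤ (w t x / pp x) * pp y * Real.exp (-αt) := by
          rw [e3]
          exact mul_le_mul_of_nonneg_left hexp
            (mul_nonneg (div_nonneg hwtx0 hppx.le) hppy.le)
        have le2 : (w t x / pp x) * pp y * Real.exp (-αt) ≤ w t y := by
          have h4 : (w t x / pp x) * pp y * Real.exp (-αt) ≤
              (((pp x / pp y) * (Real.exp (αt) * w t y)) / pp x) * pp y
                * Real.exp (-αt) := by
            apply mul_le_mul_of_nonneg_right _ (Real.exp_pos _).le
            apply mul_le_mul_of_nonneg_right _ hppy.le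
            exact (div_le_div_iff_of_pos_right hppx).2 hub
          have h6 : Real.exp (αt) * Real.exp (-αt) = 1 := by
            rw [← Real.exp_add]
            simp
          have h5 : (((pp x / pp y) * (Real.exp (αt) * w t y)) / pp x) * pp y
              * Real.exp (-αt) = w t y * (Real.exp (αt) * Real.exp (-αt)) := by
            field_simp
          rw [h5, h6, mul_one] at h4
          exact h4
        linarith
      -- integral comparison
      have hWt : Integrable (w t) (volume.restrict X) := (hPD t ht).2.1
      have hW0 : Integrable (w 0) (volume.restrict X) := (hPD 0 le_rfl).2.1
      have hPPi : Integrable pp (volume.restrict X) := hpp.2.1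
      set ft := hWt.aestronglyMeasurable.mk (w t) with hftd
      have hftm : StronglyMeasurable ft := hWt.aestronglyMeasurable.stronglyMeasurable_mk
      have hftae : w t =ᵐ[volume.restrict X] ft := hWt.aestronglyMeasurable.ae_eq_mk
      set f0 := hW0.aestronglyMeasurable.mk (w 0) with hf0d
      have hf0m : StronglyMeasurable f0 := hW0.aestronglyMeasurable.stronglyMeasurable_mk
      have hf0ae : w 0 =ᵐ[volume.restrict X] f0 := hW0.aestronglyMeasurable.ae_eq_mk
      set fp := hPPi.aestronglyMeasurable.mk pp with hfpd
      have hfpm : StronglyMeasurable fp := hPPi.aestronglyMeasurable.stronglyMeasurable_mk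
      have hfpae : pp =ᵐ[volume.restrict X] fp := hPPi.aestronglyMeasurable.ae_eq_mk
      set A : Set (Euc d) := {z | 0 < fp z} ∩ {z | 0 < f0 z} with hA
      have hAm : MeasurableSet A :=
        (measurableSet_lt measurable_const hfpm.measurable).inter
          (measurableSet_lt measurable_const hf0m.measurable)
      have hI0 : ∫ z in X, A.indicator (w 0) z = 1 := by
        have hq : ∀ᵐ z ∂(volume.restrict X), A.indicator f0 z = f0 z := by
          refine ae_restrict_of_forall_mem_matching X ?_ hf0ae hfpae hf0ae ?_
          · exact measurableSet_eq_fun (hf0m.measurable.indicator hAm) hf0m.measurable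
          · intro z hz h1 h2 _
            by_cases hzA : z ∈ A
            · rw [Set.indicator_of_mem hzA]
            · rw [Set.indicator_of_notMem hzA]
              have hzA' : fp z ≤ 0 ∨ f0 z ≤ 0 := by
                by_contra hcon
                push_neg at hcon
                exact hzA ⟨hcon.1, hcon.2⟩
              rcases hzA' with hfp0 | hf00
              · have hppz : pp z = 0 := le_antisymm (by rw [h2]; exact hfp0) (hpp.1 z)
                have : w 0 z ≤ 0 := by
                  have := hw0 z hz
                  rw [hppz] at this
                  linarith
                have hw0z : w 0 z = 0 := le_antisymm this ((hPD 0 le_rfl).1 z)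
                rw [← h1, hw0z]
              · have hw0z : w 0 z = 0 := le_antisymm (by rw [h1]; exact hf00)
                  ((hPD 0 le_rfl).1 z)
                rw [← h1, hw0z]
        have hcongr : A.indicator (w 0) =ᵐ[volume.restrict X] w 0 := by
          filter_upwards [hq, hf0ae] with z hQz h1
          by_cases hzA : z ∈ A
          · rw [Set.indicator_of_mem hzA]
          · rw [Set.indicator_of_notMem hzA]
            rw [Set.indicator_of_notMem hzA] at hQz
            rw [h1, ← hQz]
        rw [integral_congr_ae hcongr]
        exact (hPD 0 le_rfl).2.2
      have hIt : ∫ z in X, A.indicator (w t) z ≤ 1 := by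
        have hle := integral_mono (hWt.indicator hAm) hWt
          (Set.indicator_le_self' (fun u _ => (hPD t ht).1 u))
        calc ∫ z in X, A.indicator (w t) z ≤ ∫ z in X, w t z := hle
          _ = 1 := (hPD t ht).2.2
      have hmono : ∫ z in X, A.indicator (fun u => c0 * w 0 u) z
          ≤ ∫ z in X, A.indicator (w t) z := by
        apply integral_mono_ae ((hW0.const_mul c0).indicator hAm) (hWt.indicator hAm)
        have hq2 : ∀ᵐ z ∂(volume.restrict X),
            A.indicator (fun u => c0 * f0 u) z ≤ A.indicator ft z := by
          refine ae_restrict_of_forall_mem_matching X ?_ hftae hf0ae hfpae ?_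
          · exact measurableSet_le
              (((hf0m.measurable.const_mul c0).indicator hAm))
              (hftm.measurable.indicator hAm)
          · intro z hz h1 h2 h3
            by_cases hzA : z ∈ A
            · rw [Set.indicator_of_mem hzA, Set.indicator_of_mem hzA]
              have hfpz : 0 < pp z := by rw [h3]; exact hzA.1
              have hf0z : 0 < w 0 z := by rw [h2]; exact hzA.2
              rw [← h1, ← h2]
              exact hkey z hz hfpz hf0z
            · rw [Set.indicator_of_notMem hzA, Set.indicator_of_notMem hzA]
        filter_upwards [hq2, hftae, hf0ae] with z hQz h1 h2
        by_cases hzA : z ∈ A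
        · rw [Set.indicator_of_mem hzA, Set.indicator_of_mem hzA]
          rw [Set.indicator_of_mem hzA, Set.indicator_of_mem hzA] at hQz
          rw [h1, h2]
          exact hQz
        · rw [Set.indicator_of_notMem hzA, Set.indicator_of_notMem hzA]
      have hIc : ∫ z in X, A.indicator (fun u => c0 * w 0 u) z = c0 := by
        have heqf : A.indicator (fun u => c0 * w 0 u) = fun z => c0 * A.indicator (w 0) z := by
          funext z
          by_cases hzA : z ∈ A
          · rw [Set.indicator_of_mem hzA, Set.indicator_of_mem hzA]
          · rw [Set.indicator_of_notMem hzA, Set.indicator_of_notMem hzA, mul_zero]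
        rw [heqf, integral_const_mul, hI0, mul_one]
      have hc0le : c0 ≤ 1 := le_trans (le_trans (le_of_eq hIc.symm) hmono) hIt
      rw [hc0, div_le_one (mul_pos hR0 hppx)] at hc0le
      have hmul := mul_le_mul_of_nonneg_right hc0le (Real.exp_pos be).le
      have h7 : Real.exp (-be) * Real.exp be = 1 := by
        rw [← Real.exp_add]
        simp
      rw [mul_assoc, h7, mul_one] at hmul
      calc w t x ≤ R * pp x * Real.exp be := hmul
        _ = pp x * R * Real.exp ((2*C+ε)/lam) := by rw [hbe]; ring
    -- let ε → 0
    by_contra hcon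
    push_neg at hcon
    set P := pp x * R * Real.exp (2*(C/lam)) with hP
    have hPpos : 0 < P := mul_pos (mul_pos hppx hR0) (Real.exp_pos _)
    have hzgt : 1 < w t x / P := (one_lt_div hPpos).2 hcon
    set ε := lam * (Real.log (w t x / P) / 2) with hεd
    have hεpos : 0 < ε := mul_pos hlam (by linarith [Real.log_pos hzgt])
    have hb := hstep ε hεpos
    have hexpand : (2*C+ε)/lam = 2*(C/lam) + Real.log (w t x / P)/2 := by
      rw [hεd]
      field_simp
    have heqP : pp x * R * Real.exp ((2*C+ε)/lam)
        = P * Real.exp (Real.log (w t x / P)/2) := by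
      rw [hexpand, Real.exp_add, hP]
      ring
    have hlt : Real.exp (Real.log (w t x / P)/2) < w t x / P := by
      have h8 : 0 < w t x / P := lt_trans one_pos hzgt
      nth_rewrite 2 [← Real.exp_log h8]
      exact Real.exp_lt_exp.2 (by linarith [Real.log_pos hzgt])
    rw [heqP] at hb
    have : P * Real.exp (Real.log (w t x / P)/2) < P * (w t x / P) :=
      mul_lt_mul_of_pos_left hlt hPpos
    rw [mul_div_cancel₀ _ (ne_of_gt hPpos)] at this
    linarith
  -- Step 4: conclude the KL bound
  intro t ht
  set B0 := Real.log R + 2*(C/lam) with hB0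
  have hB0pos : 0 < B0 := by
    have : 0 < C / lam := div_pos hC hlam
    rw [hB0]
    linarith
  by_cases hint : Integrable (fun z => Real.log (w t z / pp z) * w t z) (volume.restrict X)
  · have hWt : Integrable (w t) (volume.restrict X) := (hPD t ht).2.1
    have hPPi : Integrable pp (volume.restrict X) := hpp.2.1
    set ft := hWt.aestronglyMeasurable.mk (w t) with hftd
    have hftm : StronglyMeasurable ft := hWt.aestronglyMeasurable.stronglyMeasurable_mk
    have hftae : w t =ᵐ[volume.restrict X] ft := hWt.aestronglyMeasurable.ae_eq_mk
    set fp := hPPi.aestronglyMeasurable.mk pp with hfpd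
    have hfpm : StronglyMeasurable fp := hPPi.aestronglyMeasurable.stronglyMeasurable_mk
    have hfpae : pp =ᵐ[volume.restrict X] fp := hPPi.aestronglyMeasurable.ae_eq_mk
    have hae : (fun z => Real.log (w t z / pp z) * w t z)
        ≤ᵐ[volume.restrict X] fun z => B0 * w t z := by
      have hq : ∀ᵐ z ∂(volume.restrict X),
          Real.log (ft z / fp z) * ft z ≤ B0 * ft z := by
        refine ae_restrict_of_forall_mem_matching X ?_ hftae hfpae hftae ?_
        · exact measurableSet_le
            (((hftm.measurable.div hfpm.measurable).log).mul hftm.measurable)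
            (hftm.measurable.const_mul B0)
        · intro z hz h1 h2 _
          rw [← h1, ← h2]
          have hwz0 : 0 ≤ w t z := (hPD t ht).1 z
          rcases le_or_gt (pp z) 0 with hppz | hppz
          · have : pp z = 0 := le_antisymm hppz (hpp.1 z)
            rw [this, div_zero, Real.log_zero, zero_mul]
            exact mul_nonneg hB0pos.le hwz0
          · rcases eq_or_lt_of_le hwz0 with hwz | hwz
            · rw [← hwz, mul_zero, mul_zero]
            · have hbd := hmain t ht z hz hppz
              have hdiv : w t z / pp z ≤ Real.exp B0 := by
                rw [div_le_iff₀ hppz, hB0, Real.exp_add, Real.exp_log hR0]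
                calc w t z ≤ pp z * R * Real.exp (2*(C/lam)) := hbd
                  _ = R * Real.exp (2*(C/lam)) * pp z := by ring
              have hlog : Real.log (w t z / pp z) ≤ B0 := by
                have := (Real.log_le_log_iff (div_pos hwz hppz) (Real.exp_pos _)).2 hdiv
                rwa [Real.log_exp] at this
              exact mul_le_mul_of_nonneg_right hlog hwz0
      filter_upwards [hq, hftae, hfpae] with z hQz h1 h2
      rw [h1, h2]
      exact hQz
    have hle := integral_mono_ae hint (hWt.const_mul B0) hae
    calc KL X (w t) pp ≤ ∫ z in X, B0 * w t z := hle
      _ = B0 := by rw [integral_const_mul, (hPD t ht).2.2, mul_one]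
      _ ≤ 2 * Real.log R + 2 * (C / lam) := by
          rw [hB0]
          linarith
  · have : KL X (w t) pp = 0 := integral_undef hint
    rw [this]
    have : 0 < C / lam := div_pos hC hlam
    linarith

/-- entropy bounds along the Fisher–Rao flow. -/
theorem FRflow_KL_bounds {d : ℕ} (X Y : Set (Euc d))
    (σ : ℝ) (hσ : 0 < σ)
    (pp ρ : Euc d → ℝ) (hpp : IsPD X pp) (hρ : IsPD Y ρ)
    (F : (Euc d → ℝ) → (Euc d → ℝ) → ℝ)
    (DFν DFμ : (Euc d → ℝ) → (Euc d → ℝ) → Euc d → ℝ)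
    (hflatν : IsFlatDerivNu X Y F DFν) (hflatμ : IsFlatDerivMu X Y F DFμ)
    (Cν Cμ : ℝ) (hCν : 0 < Cν) (hCμ : 0 < Cμ)
    (hb1 : FirstDerivBounded X Y DFν DFμ Cν Cμ)
    (D2νν D2μν D2μμ D2νμ : (Euc d → ℝ) → (Euc d → ℝ) → Euc d → Euc d → ℝ)
    (h2 : IsSecondFlatDeriv X Y DFν DFμ D2νν D2μν D2μμ D2νμ)
    (Cνν Cμν Cμμ Cνμ : ℝ)
    (hb2 : SecondDerivBounded X Y D2νν D2μν D2μμ D2νμ Cνν Cμν Cμμ Cνμ)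
    (ν₀ μ₀ : Euc d → ℝ) (hν₀ : IsPD X ν₀) (hμ₀ : IsPD Y μ₀)
    (Rν Rμ : ℝ) (hRν : 1 < Rν) (hRμ : 1 < Rμ)
    (hupν : ∀ x ∈ X, ν₀ x ≤ Rν * pp x) (hupμ : ∀ y ∈ Y, μ₀ y ≤ Rμ * ρ y)
    (nuf muf : ℝ → Euc d → ℝ)
    (hflow : IsFRFlow X Y σ pp ρ DFν DFμ ν₀ μ₀ nuf muf)
    :
    ∀ t, 0 < t →
      KL X (nuf t) pp ≤ 2 * Real.log Rν + 4 / σ ^ 2 * Cν ∧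
      KL Y (muf t) ρ ≤ 2 * Real.log Rμ + 4 / σ ^ 2 * Cμ := by
  obtain ⟨hν0, hμ0, hPDs, hcν, hcμ, hdν, hdμ⟩ := hflow
  have hσ0 : σ ≠ 0 := ne_of_gt hσ
  have hlam : 0 < σ^2/2 := by positivity
  have hν : ∀ t, 0 ≤ t → KL X (nuf t) pp ≤ 2 * Real.log Rν + 2 * (Cν / (σ^2/2)) := by
    apply main_aux X pp hpp (σ^2/2) Cν Rν hlam hCν hRν nuf
      (fun t x => -(DFν (nuf t) (muf t) x))
    · intro x hx
      rw [hν0]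
      exact hupν x hx
    · exact fun t ht => (hPDs t ht).1
    · exact hcν
    · intro x t ht
      have h := hdν x t ht
      convert h using 1
      simp only [aFun]
      ring
    · intro t ht x hx
      rw [abs_neg]
      exact (hb1 (nuf t) (muf t) (hPDs t ht).1 (hPDs t ht).2).1 x hx
  have hμ' : ∀ t, 0 ≤ t → KL Y (muf t) ρ ≤ 2 * Real.log Rμ + 2 * (Cμ / (σ^2/2)) := by
    apply main_aux Y ρ hρ (σ^2/2) Cμ Rμ hlam hCμ hRμ muf
      (fun t y => DFμ (nuf t) (muf t) y)
    · intro y hy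
      rw [hμ0]
      exact hupμ y hy
    · exact fun t ht => (hPDs t ht).2
    · exact hcμ
    · intro y t ht
      have h := hdμ y t ht
      convert h using 1; simp only [bFun]
    · intro t ht y hy
      exact (hb1 (nuf t) (muf t) (hPDs t ht).1 (hPDs t ht).2).2 y hy
  have harithν : 2 * (Cν / (σ^2/2)) = 4 / σ^2 * Cν := by
    field_simp
    ring
  have harithμ : 2 * (Cμ / (σ^2/2)) = 4 / σ^2 * Cμ := by
    field_simp
    ring
  intro t ht
  constructor
  · have := hν t ht.le
    rw [harithν] at this
    exact this
  · have := hμ' t ht.le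
    rw [harithμ] at this
    exact this
end
end

section
/- Let (ν_t, μ_t)_{t≥0} be the solution of the Fisher-Rao gradient flow system ∂_t ν_t = −a(ν_t,μ_t,·)ν_t, ∂_t μ_t = b(ν_t,μ_t,·)μ_t with initial condition satisfying sup_x ν₀(x)/π(x) ≤ R_ν, sup_y μ₀(y)/ρ(y) ≤ R_μ (R_ν, R_μ > 1), under the boundedness assumptions |δF/δν| ≤ C_ν, |δF/δμ| ≤ C_μ and bounded second-order flat derivatives. Then with R_{1,ν} := 1 + exp(3·log R_ν + (6/σ²)C_ν) and R_{1,μ} := 1 + exp(3·log R_μ + (6/σ²)C_μ), for all t > 0: sup_x ν_t(x)/π(x) ≤ R_{1,ν} and sup_y μ_t(y)/ρ(y) ≤ R_{1,μ}. -/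
open MeasureTheory Real Set

noncomputable section

namespace FRaux

variable {d : ℕ}

lemma myInt_nonneg {X : Set (Euc d)} {w : Euc d → ℝ} (hw : IntegrableOn w X)
    (h : ∀ y ∈ X, 0 ≤ w y) : 0 ≤ ∫ y in X, w y := by
  set μ' := (volume : Measure (Euc d)).restrict X with hμ'
  have hsm : AEStronglyMeasurable w μ' := hw.1
  set g := hsm.mk w with hg
  have hae : w =ᶠ[ae μ'] g := hsm.ae_eq_mk
  have hgm : Measurable g := hsm.stronglyMeasurable_mk.measurable
  rw [show (∫ y in X, w y) = ∫ y, w y ∂μ' from rfl, integral_congr_ae hae]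
  apply integral_nonneg_of_ae
  have hnull : μ' {a | ¬ w a = g a} = 0 := by
    have := hae
    rw [Filter.EventuallyEq, ae_iff] at this
    exact this
  obtain ⟨N, hNsub, hNmeas, hN0⟩ := exists_measurable_superset_of_null hnull
  rw [Filter.EventuallyLE, ae_iff]
  simp only [Pi.zero_apply]
  have hEmeas : MeasurableSet {a | ¬ (0:ℝ) ≤ g a} := by
    have : {a | ¬ (0:ℝ) ≤ g a} = {a | g a < 0} := by ext a; simp [not_le]
    rw [this]
    exact measurableSet_lt hgm measurable_const
  rw [Measure.restrict_apply hEmeas]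
  have hsub : {a | ¬ (0:ℝ) ≤ g a} ∩ X ⊆ N ∩ X := by
    rintro a ⟨haE, haX⟩
    refine ⟨hNsub ?_, haX⟩
    intro heq
    exact haE (heq ▸ h a haX)
  have : volume ({a | ¬ (0:ℝ) ≤ g a} ∩ X) ≤ μ' N := by
    rw [Measure.restrict_apply hNmeas]
    exact measure_mono hsub
  simpa [hN0] using le_antisymm (this.trans hN0.le) zero_le

lemma myInt_mono {X : Set (Euc d)} {u v : Euc d → ℝ} (hu : IntegrableOn u X)
    (hv : IntegrableOn v X) (h : ∀ y ∈ X, u y ≤ v y) :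
    ∫ y in X, u y ≤ ∫ y in X, v y := by
  have h0 : 0 ≤ ∫ y in X, (v y - u y) := by
    apply myInt_nonneg (hv.sub hu)
    intro y hy
    simp only [Pi.sub_apply]
    linarith [h y hy]
  rw [integral_sub hv hu] at h0
  linarith

lemma log_ratio_mul_ge {a p : ℝ} (ha : 0 ≤ a) (hp : 0 ≤ p) :
    -p ≤ Real.log (a / p) * a := by
  rcases eq_or_lt_of_le hp with hp0 | hp0
  · rw [← hp0, div_zero, Real.log_zero, zero_mul]; linarith
  rcases eq_or_lt_of_le ha with ha0 | ha0
  · rw [← ha0, mul_zero]; linarith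
  have h1 : Real.log (p / a) ≤ p / a - 1 := Real.log_le_sub_one_of_pos (by positivity)
  have h2 : Real.log (a / p) = - Real.log (p / a) := by
    rw [Real.log_div ha0.ne' hp0.ne', Real.log_div hp0.ne' ha0.ne']; ring
  have h3 : Real.log (p / a) * a ≤ p - a := by
    have := mul_le_mul_of_nonneg_right h1 ha
    calc Real.log (p / a) * a ≤ (p / a - 1) * a := this
    _ = p - a := by field_simp
  nlinarith [h2, h3]

lemma KL_ge_neg_one {X : Set (Euc d)} {f p : Euc d → ℝ}
    (hf : IsPD X f) (hp : IsPD X p) : -1 ≤ KL X f p := by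
  by_cases hint : IntegrableOn (fun x => Real.log (f x / p x) * f x) X
  · have := myInt_mono (u := fun x => -(p x)) (hp.2.1.neg) hint
      (fun y _ => log_ratio_mul_ge (hf.1 y) (hp.1 y))
    rw [integral_neg, hp.2.2] at this
    exact this
  · unfold KL
    rw [integral_undef hint]
    norm_num

lemma KL_le_log {X : Set (Euc d)} {f p : Euc d → ℝ} {M : ℝ} (hM : 1 ≤ M)
    (hf : IsPD X f) (hp : IsPD X p)
    (hr : ∀ x ∈ X, 0 < p x → f x ≤ M * p x) : KL X f p ≤ Real.log M := by
  have hLM : 0 ≤ Real.log M := Real.log_nonneg hM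
  have hpt : ∀ x ∈ X, Real.log (f x / p x) * f x ≤ Real.log M * f x := by
    intro x hx
    rcases eq_or_lt_of_le (hp.1 x) with hp0 | hp0
    · rw [← hp0, div_zero, Real.log_zero, zero_mul]
      exact mul_nonneg hLM (hf.1 x)
    rcases eq_or_lt_of_le (hf.1 x) with hf0 | hf0
    · rw [← hf0, mul_zero, mul_zero]
    have hd : f x / p x ≤ M := (div_le_iff₀ hp0).mpr (by linarith [hr x hx hp0])
    have : Real.log (f x / p x) ≤ Real.log M :=
      Real.log_le_log (by positivity) hd
    exact mul_le_mul_of_nonneg_right this (hf.1 x)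
  by_cases hint : IntegrableOn (fun x => Real.log (f x / p x) * f x) X
  · have := myInt_mono hint (hf.2.1.const_mul _) hpt
    unfold KL
    rw [integral_const_mul, hf.2.2, mul_one] at this
    exact this
  · unfold KL
    rw [integral_undef hint]
    exact hLM



lemma aux_m_le (P h₀ q : ℝ) (hq : 0 ≤ q) : P - q - |h₀ - P + q| ≤ h₀ := by
  rcases abs_cases (h₀ - P + q) with ⟨h1, h2⟩ | ⟨h1, h2⟩ <;> rw [h1] <;> linarith

lemma aux_decay (a c : ℝ) (h0 : 0 ≤ a) (h1 : a ≤ 1) : -|c| ≤ a * c := by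
  rcases abs_cases c with ⟨e1, e2⟩ | ⟨e1, e2⟩ <;> rw [e1] <;> nlinarith

variable {d : ℕ} {X : Set (Euc d)} {pp : Euc d → ℝ} {l C : ℝ} {f G : ℝ → Euc d → ℝ}

/-- derivative of the log of the flow at an interior time -/
lemma logDerivAt
    (hderiv : ∀ x s, 0 ≤ s → HasDerivWithinAt (fun u => f u x)
      ((G s x - l * Real.log (f s x / pp x) + l * KL X (f s) pp) * f s x) (Ici 0) s)
    {x : Euc d} {s : ℝ} (hs : 0 < s) (hppx : 0 < pp x) (hfs : 0 < f s x) :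
    HasDerivAt (fun u => Real.log (f u x))
      (G s x - l * (Real.log (f s x) - Real.log (pp x)) + l * KL X (f s) pp) s := by
  have h1 : HasDerivAt (fun u => f u x)
      ((G s x - l * Real.log (f s x / pp x) + l * KL X (f s) pp) * f s x) s :=
    (hderiv x s hs.le).hasDerivAt (Ici_mem_nhds hs)
  have h2 := h1.log hfs.ne'
  convert h2 using 1
  rw [Real.log_div hfs.ne' hppx.ne', mul_div_cancel_right₀ _ hfs.ne']

lemma pair_bound (hl : 0 < l)
    (hderiv : ∀ x s, 0 ≤ s → HasDerivWithinAt (fun u => f u x)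
      ((G s x - l * Real.log (f s x / pp x) + l * KL X (f s) pp) * f s x) (Ici 0) s)
    (hG : ∀ s, 0 ≤ s → ∀ x ∈ X, |G s x| ≤ C)
    (hcont : ∀ x, ContinuousOn (fun s => f s x) (Ici 0))
    {x y : Euc d} (hxX : x ∈ X) (hyX : y ∈ X)
    (hppx : 0 < pp x) (hppy : 0 < pp y)
    {s₀ t : ℝ} (hs₀ : 0 ≤ s₀) (hst : s₀ ≤ t)
    (hfx : ∀ s ∈ Icc s₀ t, 0 < f s x) (hfy : ∀ s ∈ Icc s₀ t, 0 < f s y) :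
    Real.log (f t x) - Real.log (f t y) - (Real.log (pp x) - Real.log (pp y) + 2*C/l)
      ≤ Real.exp (-(l * (t - s₀))) *
        (Real.log (f s₀ x) - Real.log (f s₀ y) - (Real.log (pp x) - Real.log (pp y) + 2*C/l)) := by
  set B : ℝ := Real.log (pp x) - Real.log (pp y) + 2*C/l with hB
  set ρ : ℝ → ℝ := fun s => Real.exp (l*s) * (Real.log (f s x) - Real.log (f s y) - B) with hρ
  have hIcc : Icc s₀ t ⊆ Ici 0 := fun s hs => le_trans hs₀ hs.1
  have hD : ∀ s ∈ Ioo s₀ t, HasDerivAt ρ (Real.exp (l*s) * (G s x - G s y - 2*C)) s := by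
    intro s hs
    have hsIcc : s ∈ Icc s₀ t := Ioo_subset_Icc_self hs
    have hs0 : 0 < s := lt_of_le_of_lt hs₀ hs.1
    have hdx := logDerivAt hderiv hs0 hppx (hfx s hsIcc)
    have hdy := logDerivAt hderiv hs0 hppy (hfy s hsIcc)
    have hexp : HasDerivAt (fun s => Real.exp (l*s)) (Real.exp (l*s) * (l*1)) s :=
      ((hasDerivAt_id s).const_mul l).exp
    have hmul := hexp.mul ((hdx.sub hdy).sub_const B)
    refine hmul.congr_deriv ?_
    simp only [Pi.sub_apply]
    rw [hB]
    field_simp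
    ring
  have hcontρ : ContinuousOn ρ (Icc s₀ t) := by
    apply ContinuousOn.mul
    · exact (Real.continuous_exp.comp (continuous_const.mul continuous_id)).continuousOn
    · exact ((((hcont x).mono hIcc).log fun s hs => (hfx s hs).ne').sub
        (((hcont y).mono hIcc).log fun s hs => (hfy s hs).ne')).sub continuousOn_const
  have hanti : AntitoneOn ρ (Icc s₀ t) := by
    apply antitoneOn_of_deriv_nonpos (convex_Icc s₀ t) hcontρ
    · intro s hs
      rw [interior_Icc] at hs
      exact (hD s hs).differentiableAt.differentiableWithinAt
    · intro s hs
      rw [interior_Icc] at hs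
      rw [(hD s hs).deriv]
      have h1 := hG s (le_trans hs₀ hs.1.le) x hxX
      have h2 := hG s (le_trans hs₀ hs.1.le) y hyX
      rw [abs_le] at h1 h2
      apply mul_nonpos_of_nonneg_of_nonpos (Real.exp_nonneg _)
      linarith
  have hρt : ρ t ≤ ρ s₀ := hanti ⟨le_refl _, hst⟩ ⟨hst, le_refl _⟩ hst
  have key : Real.exp (-(l*t)) * ρ t ≤ Real.exp (-(l*t)) * ρ s₀ :=
    mul_le_mul_of_nonneg_left hρt (Real.exp_nonneg _)
  calc Real.log (f t x) - Real.log (f t y) - B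
      = Real.exp (-(l*t)) * ρ t := by
        rw [hρ]; rw [← mul_assoc, ← Real.exp_add]; norm_num
    _ ≤ Real.exp (-(l*t)) * ρ s₀ := key
    _ = Real.exp (-(l * (t - s₀))) * (Real.log (f s₀ x) - Real.log (f s₀ y) - B) := by
        rw [hρ]
        simp only []
        rw [← mul_assoc, ← Real.exp_add]
        ring_nf

lemma lowbar (hl : 0 < l) (hC : 0 < C)
    (hderiv : ∀ x s, 0 ≤ s → HasDerivWithinAt (fun u => f u x)
      ((G s x - l * Real.log (f s x / pp x) + l * KL X (f s) pp) * f s x) (Ici 0) s)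
    (hG : ∀ s, 0 ≤ s → ∀ x ∈ X, |G s x| ≤ C)
    (hcont : ∀ x, ContinuousOn (fun s => f s x) (Ici 0))
    (hK : ∀ s, 0 ≤ s → -1 ≤ KL X (f s) pp)
    (hnn : ∀ s, 0 ≤ s → ∀ z, 0 ≤ f s z)
    {y : Euc d} (hyX : y ∈ X) (hppy : 0 < pp y) (hf0 : 0 < f 0 y)
    {t : ℝ} (ht : 0 ≤ t) :
    ∃ ε, 0 < ε ∧ ∀ s ∈ Icc 0 t, ε ≤ f s y := by
  have hql : (0:ℝ) ≤ (C + l)/l := le_of_lt (div_pos (by linarith) hl)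
  refine ⟨Real.exp (Real.log (pp y) - (C+l)/l -
      |Real.log (f 0 y) - Real.log (pp y) + (C+l)/l|), Real.exp_pos _, ?_⟩
  set m : ℝ := Real.log (pp y) - (C+l)/l -
      |Real.log (f 0 y) - Real.log (pp y) + (C+l)/l| with hm
  have hm_le : m ≤ Real.log (f 0 y) := aux_m_le _ _ _ hql
  have hεf0 : Real.exp m ≤ f 0 y := by
    rw [← Real.exp_log hf0]
    exact Real.exp_le_exp.mpr hm_le
  -- the key monotonicity step: as long as f is positive on [0, s'], one has exp m ≤ f s' y
  have keystep : ∀ s', s' ∈ Icc 0 t → (∀ s ∈ Icc 0 s', 0 < f s y) →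
      Real.exp m ≤ f s' y := by
    intro s' hs' hpos
    set η : ℝ → ℝ := fun s => Real.exp (l*s) * (Real.log (f s y) - Real.log (pp y) + (C+l)/l)
      with hη
    have hIcc : Icc 0 s' ⊆ Ici 0 := fun s hs => hs.1
    have hD : ∀ s ∈ Ioo 0 s', HasDerivAt η
        (Real.exp (l*s) * (C + l + G s y + l * KL X (f s) pp)) s := by
      intro s hs
      have hsIcc : s ∈ Icc 0 s' := Ioo_subset_Icc_self hs
      have hdy := logDerivAt hderiv hs.1 hppy (hpos s hsIcc)
      have hexp : HasDerivAt (fun s => Real.exp (l*s)) (Real.exp (l*s) * (l*1)) s :=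
        ((hasDerivAt_id s).const_mul l).exp
      have hmul := hexp.mul ((hdy.sub_const (Real.log (pp y))).add_const ((C+l)/l))
      refine hmul.congr_deriv ?_
      field_simp
      ring
    have hcontη : ContinuousOn η (Icc 0 s') := by
      apply ContinuousOn.mul
      · exact (Real.continuous_exp.comp (continuous_const.mul continuous_id)).continuousOn
      · exact ((((hcont y).mono hIcc).log fun s hs => (hpos s hs).ne').sub
          continuousOn_const).add continuousOn_const
    have hmono : MonotoneOn η (Icc 0 s') := by
      apply monotoneOn_of_deriv_nonneg (convex_Icc 0 s') hcontη
      · intro s hs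
        rw [interior_Icc] at hs
        exact (hD s hs).differentiableAt.differentiableWithinAt
      · intro s hs
        rw [interior_Icc] at hs
        rw [(hD s hs).deriv]
        have h1 := hG s hs.1.le y hyX
        rw [abs_le] at h1
        have h2 := hK s hs.1.le
        apply mul_nonneg (Real.exp_nonneg _)
        nlinarith
    have hη0 : η 0 = Real.log (f 0 y) - Real.log (pp y) + (C+l)/l := by
      rw [hη]; simp
    have hmono' : η 0 ≤ η s' := hmono ⟨le_refl _, hs'.1⟩ ⟨hs'.1, le_refl _⟩ hs'.1
    -- unpack: log (f s' y) ≥ exp (-(l s')) * c₀ - ... ≥ m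
    have hs'pos : 0 < f s' y := hpos s' ⟨hs'.1, le_refl _⟩
    have hexps : (0:ℝ) < Real.exp (-(l*s')) := Real.exp_pos _
    have hkey : m ≤ Real.log (f s' y) := by
      have h3 : Real.exp (-(l*s')) * η s' =
          Real.log (f s' y) - Real.log (pp y) + (C+l)/l := by
        rw [hη]
        simp only []
        rw [← mul_assoc, ← Real.exp_add]
        ring_nf
        simp [Real.exp_zero]
      have h4 : Real.exp (-(l*s')) * η 0 ≤ Real.exp (-(l*s')) * η s' :=
        mul_le_mul_of_nonneg_left hmono' hexps.le
      rw [h3, hη0] at h4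
      have h5 : Real.exp (-(l*s')) ≤ 1 := by
        calc Real.exp (-(l*s')) ≤ Real.exp 0 := by
              apply Real.exp_le_exp.mpr
              nlinarith [hs'.1]
        _ = 1 := Real.exp_zero
      have h6 := aux_decay (Real.exp (-(l*s')))
        (Real.log (f 0 y) - Real.log (pp y) + (C+l)/l) hexps.le h5
      rw [hm]
      linarith
    calc Real.exp m ≤ Real.exp (Real.log (f s' y)) := Real.exp_le_exp.mpr hkey
    _ = f s' y := Real.exp_log hs'pos
  by_contra hcon
  push_neg at hcon
  obtain ⟨sb, hsbIcc, hsbval⟩ := hcon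
  set W : Set ℝ := {s | s ∈ Icc 0 t ∧ f s y ≤ f sb y} with hWdef
  have hWne : W.Nonempty := ⟨sb, hsbIcc, le_refl _⟩
  have hWbdd : BddBelow W := ⟨0, fun s hs => hs.1.1⟩
  set s1 : ℝ := sInf W with hs1def
  have hs10 : 0 ≤ s1 := le_csInf hWne fun b hb => hb.1.1
  have hs1t : s1 ≤ t := le_trans (csInf_le hWbdd ⟨hsbIcc, le_refl _⟩) hsbIcc.2
  have hclos : s1 ∈ closure W := csInf_mem_closure hWne hWbdd
  haveI : (nhdsWithin s1 W).NeBot := mem_closure_iff_nhdsWithin_neBot.mp hclos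
  have hcw : ContinuousWithinAt (fun s => f s y) W s1 :=
    ((hcont y) s1 hs10).mono (fun s hs => hs.1.1)
  have hfs1 : f s1 y ≤ f sb y :=
    le_of_tendsto hcw (eventually_nhdsWithin_of_forall fun s hs => hs.2)
  have hs1pos : 0 < s1 := by
    rcases lt_or_eq_of_le hs10 with h | h
    · exact h
    · exfalso
      rw [← h] at hfs1
      linarith
  have hbefore : ∀ s ∈ Ico 0 s1, 0 < f s y := by
    intro s hs
    have hnW : s ∉ W := fun hmem => absurd (csInf_le hWbdd hmem) (not_le.mpr hs.2)
    have : ¬ (f s y ≤ f sb y) := fun hle => hnW ⟨⟨hs.1, le_trans hs.2.le hs1t⟩, hle⟩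
    have hnn' := hnn sb hsbIcc.1 y
    linarith [not_le.mp this]
  have hlow : ∀ s ∈ Ico 0 s1, Real.exp m ≤ f s y := by
    intro s hs
    exact keystep s ⟨hs.1, le_trans hs.2.le hs1t⟩
      (fun u hu => hbefore u ⟨hu.1, lt_of_le_of_lt hu.2 hs.2⟩)
  have hclos2 : s1 ∈ closure (Ico 0 s1) := by
    rw [closure_Ico (ne_of_lt hs1pos)]
    exact ⟨hs10, le_refl _⟩
  haveI : (nhdsWithin s1 (Ico 0 s1)).NeBot := mem_closure_iff_nhdsWithin_neBot.mp hclos2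
  have hcw2 : ContinuousWithinAt (fun s => f s y) (Ico 0 s1) s1 :=
    ((hcont y) s1 hs10).mono (fun s hs => hs.1)
  have hfin : Real.exp m ≤ f s1 y :=
    ge_of_tendsto hcw2 (eventually_nhdsWithin_of_forall hlow)
  linarith

lemma select (hR : 1 < (R:ℝ)) {t α : ℝ} (hα0 : 0 < α) (hα1 : α ≤ 1)
    (hpd0 : IsPD X (f 0)) (hpdt : IsPD X (f t))
    (hup : ∀ x ∈ X, f 0 x ≤ R * pp x) :
    ∃ y ∈ X, 0 < f 0 y ∧ f t y * pp y ^ (α-1) * f 0 y ^ (-α) ≤ R ^ ((2:ℝ)-α) := by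
  have hR0 : (0:ℝ) ≤ R := by linarith
  by_contra hcon
  push_neg at hcon
  have hptw : ∀ y ∈ X, R ^ ((2:ℝ)-α) * f 0 y ≤ R ^ ((1:ℝ)-α) * f t y := by
    intro y hy
    rcases eq_or_lt_of_le (hpd0.1 y) with h0 | h0
    · rw [← h0, mul_zero]
      exact mul_nonneg (Real.rpow_nonneg hR0 _) (hpdt.1 y)
    · have hppy : 0 < pp y := by nlinarith [hup y hy]
      have hψ := (hcon y hy h0).le
      have hfty := hpdt.1 y
      calc R ^ ((2:ℝ)-α) * f 0 y
          ≤ (f t y * pp y ^ (α-1) * f 0 y ^ (-α)) * f 0 y :=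
            mul_le_mul_of_nonneg_right hψ (hpd0.1 y)
        _ = f t y * pp y ^ (α-1) * f 0 y ^ ((1:ℝ)-α) := by
            have he : f 0 y ^ (-α) * f 0 y = f 0 y ^ ((1:ℝ)-α) := by
              nth_rewrite 2 [← Real.rpow_one (f 0 y)]
              rw [← Real.rpow_add h0]
              rw [show -α+1 = (1:ℝ)-α from by ring]
            rw [mul_assoc, he]
        _ ≤ f t y * pp y ^ (α-1) * (R * pp y) ^ ((1:ℝ)-α) := by
            apply mul_le_mul_of_nonneg_left
              (Real.rpow_le_rpow (hpd0.1 y) (hup y hy) (by linarith))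
            exact mul_nonneg hfty (Real.rpow_nonneg hppy.le _)
        _ = R ^ ((1:ℝ)-α) * f t y := by
            rw [Real.mul_rpow hR0 hppy.le]
            rw [show f t y * pp y ^ (α-1) * (R^((1:ℝ)-α) * pp y^((1:ℝ)-α)) =
              R^((1:ℝ)-α) * f t y * (pp y^(α-1) * pp y^((1:ℝ)-α)) from by ring]
            rw [← Real.rpow_add hppy, show α-1+((1:ℝ)-α) = 0 from by ring,
              Real.rpow_zero, mul_one]
  have hint := myInt_mono ((hpd0.2.1).const_mul _) ((hpdt.2.1).const_mul _) hptw
  rw [integral_const_mul, integral_const_mul, hpd0.2.2, hpdt.2.2, mul_one, mul_one] at hint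
  have hlt : ((1:ℝ) - α) < 2 - α := by linarith
  exact absurd hint (not_le.mpr ((Real.rpow_lt_rpow_left_iff hR).mpr hlt))

variable {R : ℝ}

lemma step1 (hl : 0 < l) (hC : 0 < C) (hR : 1 < R) (hpp : IsPD X pp)
    (hpd : ∀ s, 0 ≤ s → IsPD X (f s))
    (hcont : ∀ x, ContinuousOn (fun s => f s x) (Ici 0))
    (hderiv : ∀ x s, 0 ≤ s → HasDerivWithinAt (fun u => f u x)
      ((G s x - l * Real.log (f s x / pp x) + l * KL X (f s) pp) * f s x) (Ici 0) s)
    (hG : ∀ s, 0 ≤ s → ∀ x ∈ X, |G s x| ≤ C)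
    (hup : ∀ x ∈ X, f 0 x ≤ R * pp x)
    {t : ℝ} (ht : 0 ≤ t) {x : Euc d} (hx : x ∈ X) (hppx : 0 < pp x) :
    f t x ≤ Real.exp (2*Real.log R + 2*C/l) * pp x := by
  have hnn : ∀ s, 0 ≤ s → ∀ z, 0 ≤ f s z := fun s hs z => (hpd s hs).1 z
  have hK : ∀ s, 0 ≤ s → -1 ≤ KL X (f s) pp := fun s hs => KL_ge_neg_one (hpd s hs) hpp
  have hlogR : 0 < Real.log R := Real.log_pos hR
  have hql : 0 < C/l := div_pos hC hl
  rcases eq_or_lt_of_le ((hpd t ht).1 x) with hft0 | hft0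
  · rw [← hft0]; positivity
  set α : ℝ := Real.exp (-(l*t)) with hα
  clear_value α
  have hα0 : 0 < α := by rw [hα]; exact Real.exp_pos _
  have hα1 : α ≤ 1 := by
    rw [hα, ← Real.exp_zero]
    apply Real.exp_le_exp.mpr
    nlinarith
  obtain ⟨y, hyX, hf0y, hψ⟩ := select hR hα0 hα1 (hpd 0 (le_refl _)) (hpd t ht) hup
  have hppy : 0 < pp y := by nlinarith [hup y hyX]
  obtain ⟨ε, hε0, hεlow⟩ := lowbar hl hC hderiv hG hcont hK hnn hyX hppy hf0y ht
  have hfy : ∀ s ∈ Icc 0 t, 0 < f s y := fun s hs => lt_of_lt_of_le hε0 (hεlow s hs)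
  have hfty : 0 < f t y := hfy t ⟨ht, le_refl _⟩
  have hRpos : (0:ℝ) < R := lt_trans zero_lt_one hR
  have hψpos : 0 < f t y * pp y ^ (α-1) * f 0 y ^ (-α) := by positivity
  have hlogψ : Real.log (f t y) - Real.log (pp y)
      - α*(Real.log (f 0 y) - Real.log (pp y)) ≤ (2-α)*Real.log R := by
    have h1 := Real.log_le_log hψpos hψ
    rw [Real.log_rpow hRpos] at h1
    rw [Real.log_mul (by positivity : f t y * pp y ^ (α-1) ≠ 0) (by positivity : f 0 y ^ (-α) ≠ 0)] at h1
    rw [Real.log_mul hfty.ne' (by positivity : pp y ^ (α-1) ≠ 0)] at h1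
    rw [Real.log_rpow hppy, Real.log_rpow hf0y] at h1
    nlinarith [h1]
  have h₀y_le : Real.log (f 0 y) - Real.log (pp y) ≤ Real.log R := by
    have h2 := Real.log_le_log hf0y (hup y hyX)
    rw [Real.log_mul hRpos.ne' hppy.ne'] at h2
    linarith
  have hαy := mul_le_mul_of_nonneg_left h₀y_le hα0.le
  have hfty_le : Real.log (f t y) - Real.log (pp y) ≤ 2*Real.log R := by nlinarith [hlogψ, hαy]
  have final : Real.log (f t x) - Real.log (pp x) ≤ 2*Real.log R + 2*C/l → f t x ≤ Real.exp (2*Real.log R + 2*C/l) * pp x := by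
    intro hfin
    rw [← Real.exp_log hft0, ← Real.exp_log hppx, ← Real.exp_add]
    apply Real.exp_le_exp.mpr
    linarith
  apply final
  by_cases hzero : ∃ s ∈ Icc 0 t, f s x = 0
  · -- Case B : f hits zero; let s1 be the last zero
    obtain ⟨s0, hs0Icc, hs0z⟩ := hzero
    set Z : Set ℝ := {s | s ∈ Icc 0 t ∧ f s x = 0} with hZdef
    have hZne : Z.Nonempty := ⟨s0, hs0Icc, hs0z⟩
    have hZbdd : BddAbove Z := ⟨t, fun s hs => hs.1.2⟩
    set s1 : ℝ := sSup Z with hs1def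
    have hs10 : 0 ≤ s1 := le_trans hs0Icc.1 (le_csSup hZbdd ⟨hs0Icc, hs0z⟩)
    have hs1t : s1 ≤ t := csSup_le hZne fun b hb => hb.1.2
    have hclosZ : s1 ∈ closure Z := csSup_mem_closure hZne hZbdd
    haveI : (nhdsWithin s1 Z).NeBot := mem_closure_iff_nhdsWithin_neBot.mp hclosZ
    have hcwZ : ContinuousWithinAt (fun s => f s x) Z s1 :=
      ((hcont x) s1 hs10).mono (fun s hs => hs.1.1)
    have hfs1 : f s1 x = 0 := by
      have h2 : Filter.Tendsto (fun s => f s x) (nhdsWithin s1 Z) (nhds 0) := by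
        apply Filter.Tendsto.congr' _ tendsto_const_nhds
        exact (eventually_nhdsWithin_of_forall fun s hs => hs.2.symm)
      exact tendsto_nhds_unique hcwZ h2
    have hs1lt : s1 < t := by
      rcases lt_or_eq_of_le hs1t with h | h
      · exact h
      · exfalso; rw [h] at hfs1; rw [hfs1] at hft0; exact lt_irrefl _ hft0
    have hafter : ∀ s ∈ Ioc s1 t, 0 < f s x := by
      intro s hs
      rcases eq_or_lt_of_le ((hpd s (le_trans hs10 hs.1.le)).1 x) with h | h
      · exfalso
        have : s ∈ Z := ⟨⟨le_trans hs10 hs.1.le, hs.2⟩, h.symm⟩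
        exact absurd (le_csSup hZbdd this) (not_le.mpr hs.1)
      · exact h
    -- choose s2 close to s1 with f s2 x small
    set Bc : ℝ := Real.log (pp x) - Real.log (pp y) + 2*C/l with hBc
    clear_value Bc
    have hδ0 : 0 < ε * Real.exp Bc := by positivity
    have hcw3 : ContinuousWithinAt (fun s => f s x) (Ioc s1 t) s1 :=
      ((hcont x) s1 hs10).mono (fun s hs => le_trans hs10 hs.1.le)
    haveI : (nhdsWithin s1 (Ioc s1 t)).NeBot := by
      apply mem_closure_iff_nhdsWithin_neBot.mp
      rw [closure_Ioc (ne_of_lt hs1lt)]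
      exact ⟨le_refl _, hs1t⟩
    have hev : ∀ᶠ s in nhdsWithin s1 (Ioc s1 t), f s x < ε * Real.exp Bc := by
      have h3 : Filter.Tendsto (fun s => f s x) (nhdsWithin s1 (Ioc s1 t)) (nhds 0) := by
        rw [← hfs1]; exact hcw3
      exact h3.eventually_lt_const hδ0
    obtain ⟨s2, hs2small, hs2mem⟩ := (hev.and eventually_mem_nhdsWithin).exists
    have hs20 : 0 ≤ s2 := le_trans hs10 hs2mem.1.le
    have hfx2 : ∀ s ∈ Icc s2 t, 0 < f s x :=
      fun s hs => hafter s ⟨lt_of_lt_of_le hs2mem.1 hs.1, hs.2⟩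
    have hfy2 : ∀ s ∈ Icc s2 t, 0 < f s y :=
      fun s hs => hfy s ⟨le_trans hs20 hs.1, hs.2⟩
    have hpb := pair_bound hl hderiv hG hcont hx hyX hppx hppy hs20 hs2mem.2 hfx2 hfy2
    rw [← hBc] at hpb
    have hs2pos : 0 < f s2 x := hfx2 s2 ⟨le_refl _, hs2mem.2⟩
    have hrs2 : Real.log (f s2 x) - Real.log (f s2 y) - Bc ≤ 0 := by
      have h4 : Real.log (f s2 x) ≤ Real.log (ε * Real.exp Bc) :=
        Real.log_le_log hs2pos hs2small.le
      rw [Real.log_mul hε0.ne' (Real.exp_pos _).ne', Real.log_exp] at h4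
      have h5 : Real.log ε ≤ Real.log (f s2 y) :=
        Real.log_le_log hε0 (hεlow s2 ⟨hs20, hs2mem.2⟩)
      linarith
    have hRHS : Real.exp (-(l * (t - s2))) *
        (Real.log (f s2 x) - Real.log (f s2 y) - Bc) ≤ 0 :=
      mul_nonpos_of_nonneg_of_nonpos (Real.exp_nonneg _) hrs2
    have hfin2 : Real.log (f t x) - Real.log (f t y) - Bc ≤ 0 := le_trans hpb hRHS
    linarith [hfty_le, hfin2]
  · -- Case A : f positive on all of [0,t]
    push_neg at hzero
    have hfx : ∀ s ∈ Icc 0 t, 0 < f s x := by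
      intro s hs
      rcases eq_or_lt_of_le ((hpd s hs.1).1 x) with h | h
      · exact absurd h.symm (hzero s hs)
      · exact h
    have hpb := pair_bound hl hderiv hG hcont hx hyX hppx hppy (le_refl 0) ht hfx hfy
    rw [show t - (0:ℝ) = t from by ring] at hpb
    rw [← hα] at hpb
    have hf0x : 0 < f 0 x := hfx 0 ⟨le_refl _, ht⟩
    have h₀x_le : Real.log (f 0 x) - Real.log (pp x) ≤ Real.log R := by
      have h2 := Real.log_le_log hf0x (hup x hx)
      rw [Real.log_mul hRpos.ne' hppx.ne'] at h2
      linarith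
    have hαx := mul_le_mul_of_nonneg_left h₀x_le hα0.le
    have haq : 0 ≤ α*(2*C/l) := by positivity
    nlinarith [hpb, hlogψ, hαx, haq]


lemma main_flow_bound (hl : 0 < l) (hC : 0 < C) (hR : 1 < R) (hpp : IsPD X pp)
    (hpd : ∀ s, 0 ≤ s → IsPD X (f s))
    (hcont : ∀ x, ContinuousOn (fun s => f s x) (Ici 0))
    (hderiv : ∀ x s, 0 ≤ s → HasDerivWithinAt (fun u => f u x)
      ((G s x - l * Real.log (f s x / pp x) + l * KL X (f s) pp) * f s x) (Ici 0) s)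
    (hG : ∀ s, 0 ≤ s → ∀ x ∈ X, |G s x| ≤ C)
    (hup : ∀ x ∈ X, f 0 x ≤ R * pp x)
    (E : ℝ) (hE : 2*Real.log R + 2*C/l ≤ E) :
    ∀ t, 0 ≤ t → ∀ x ∈ X, f t x ≤ (1 + Real.exp E) * pp x := by
  intro t ht x hx
  have hlogR : 0 < Real.log R := Real.log_pos hR
  have hql : 0 < C/l := div_pos hC hl
  have hql' : 2*C/l = 2*(C/l) := by ring
  rcases eq_or_lt_of_le (hpp.1 x) with hppx | hppx
  · -- pp x = 0 : then f stays 0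
    have hM1 : (1:ℝ) ≤ Real.exp (2*Real.log R + 2*C/l) := by
      rw [← Real.exp_zero]
      apply Real.exp_le_exp.mpr
      nlinarith
    have hK2 : ∀ s, 0 ≤ s → KL X (f s) pp ≤ 2*Real.log R + 2*C/l := by
      intro s hs
      have h1 := KL_le_log hM1 (hpd s hs) hpp
        (fun z hz hppz => step1 hl hC hR hpp hpd hcont hderiv hG hup hs hz hppz)
      rw [Real.log_exp] at h1
      exact h1
    set Ch : ℝ := C + l*(2*Real.log R + 2*C/l) with hCh
    clear_value Ch
    set w : ℝ → ℝ := fun s => Real.exp (-(Ch*s)) * f s x with hw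
    have hD : ∀ s ∈ Ioo 0 t, HasDerivAt w
        (Real.exp (-(Ch*s)) * (-(Ch*1)) * f s x +
          Real.exp (-(Ch*s)) * ((G s x + l * KL X (f s) pp) * f s x)) s := by
      intro s hs
      have hf' := (hderiv x s hs.1.le).hasDerivAt (Ici_mem_nhds hs.1)
      rw [← hppx, div_zero, Real.log_zero, mul_zero, sub_zero] at hf'
      have hexp : HasDerivAt (fun s => Real.exp (-(Ch*s))) (Real.exp (-(Ch*s)) * (-(Ch*1))) s :=
        (((hasDerivAt_id s).const_mul Ch).neg).exp
      exact hexp.mul hf'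
    have hcontw : ContinuousOn w (Icc 0 t) := by
      apply ContinuousOn.mul
      · exact (Real.continuous_exp.comp (continuous_const.mul continuous_id).neg).continuousOn
      · exact (hcont x).mono (fun s hs => hs.1)
    have hanti : AntitoneOn w (Icc 0 t) := by
      apply antitoneOn_of_deriv_nonpos (convex_Icc 0 t) hcontw
      · intro s hs
        rw [interior_Icc] at hs
        exact (hD s hs).differentiableAt.differentiableWithinAt
      · intro s hs
        rw [interior_Icc] at hs
        rw [(hD s hs).deriv]
        have h1 := hG s hs.1.le x hx
        rw [abs_le] at h1
        have h2 := hK2 s hs.1.le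
        have h3 : l * KL X (f s) pp ≤ l * (2*Real.log R + 2*C/l) :=
          mul_le_mul_of_nonneg_left h2 hl.le
        have h4 : 0 ≤ f s x := (hpd s hs.1.le).1 x
        have h5 : 0 ≤ Real.exp (-(Ch*s)) := Real.exp_nonneg _
        have h6 : Real.exp (-(Ch*s)) * (-(Ch*1)) * f s x +
            Real.exp (-(Ch*s)) * ((G s x + l * KL X (f s) pp) * f s x)
            = Real.exp (-(Ch*s)) * ((G s x + l * KL X (f s) pp - Ch) * f s x) := by ring
        rw [h6]
        apply mul_nonpos_of_nonneg_of_nonpos h5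
        apply mul_nonpos_of_nonpos_of_nonneg _ h4
        linarith
    have hwt : w t ≤ w 0 := hanti ⟨le_refl _, ht⟩ ⟨ht, le_refl _⟩ ht
    have hw0 : w 0 = f 0 x := by rw [hw]; simp
    have hup0 : f 0 x ≤ 0 := by
      have h7 := hup x hx
      rw [← hppx, mul_zero] at h7
      exact h7
    have hwt' : Real.exp (-(Ch*t)) * f t x ≤ 0 := by
      rw [hw0] at hwt
      calc Real.exp (-(Ch*t)) * f t x = w t := by rw [hw]
      _ ≤ f 0 x := hwt
      _ ≤ 0 := hup0
    have hft : f t x ≤ 0 := by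
      by_contra hcc
      push_neg at hcc
      nlinarith [mul_pos (Real.exp_pos (-(Ch*t))) hcc]
    rw [← hppx, mul_zero]
    exact hft
  · -- pp x > 0
    have h1 := step1 hl hC hR hpp hpd hcont hderiv hG hup ht hx hppx
    apply le_trans h1
    apply mul_le_mul_of_nonneg_right _ hppx.le
    calc Real.exp (2*Real.log R + 2*C/l) ≤ Real.exp E := Real.exp_le_exp.mpr hE
    _ ≤ 1 + Real.exp E := by linarith

end FRaux

/-- upper ratio bounds along the Fisher–Rao flow. -/
theorem FRflow_upper_ratio_bounds {d : ℕ} (X Y : Set (Euc d))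
    (σ : ℝ) (hσ : 0 < σ)
    (pp ρ : Euc d → ℝ) (hpp : IsPD X pp) (hρ : IsPD Y ρ)
    (F : (Euc d → ℝ) → (Euc d → ℝ) → ℝ)
    (DFν DFμ : (Euc d → ℝ) → (Euc d → ℝ) → Euc d → ℝ)
    (hflatν : IsFlatDerivNu X Y F DFν) (hflatμ : IsFlatDerivMu X Y F DFμ)
    (Cν Cμ : ℝ) (hCν : 0 < Cν) (hCμ : 0 < Cμ)
    (hb1 : FirstDerivBounded X Y DFν DFμ Cν Cμ)
    (D2νν D2μν D2μμ D2νμ : (Euc d → ℝ) → (Euc d → ℝ) → Euc d → Euc d → ℝ)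
    (h2 : IsSecondFlatDeriv X Y DFν DFμ D2νν D2μν D2μμ D2νμ)
    (Cνν Cμν Cμμ Cνμ : ℝ)
    (hb2 : SecondDerivBounded X Y D2νν D2μν D2μμ D2νμ Cνν Cμν Cμμ Cνμ)
    (ν₀ μ₀ : Euc d → ℝ) (hν₀ : IsPD X ν₀) (hμ₀ : IsPD Y μ₀)
    (Rν Rμ : ℝ) (hRν : 1 < Rν) (hRμ : 1 < Rμ)
    (hupν : ∀ x ∈ X, ν₀ x ≤ Rν * pp x) (hupμ : ∀ y ∈ Y, μ₀ y ≤ Rμ * ρ y)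
    (nuf muf : ℝ → Euc d → ℝ)
    (hflow : IsFRFlow X Y σ pp ρ DFν DFμ ν₀ μ₀ nuf muf)
    :
    ∀ t, 0 < t →
      (∀ x ∈ X, nuf t x ≤ (1 + Real.exp (3 * Real.log Rν + 6 / σ ^ 2 * Cν)) * pp x) ∧
      (∀ y ∈ Y, muf t y ≤ (1 + Real.exp (3 * Real.log Rμ + 6 / σ ^ 2 * Cμ)) * ρ y) := by
  intro t ht
  obtain ⟨hν0eq, hμ0eq, hpdall, hcontν, hcontμ, hdν, hdμ⟩ := hflow
  have hl : 0 < σ^2/2 := by positivity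
  have hσ2 : (0:ℝ) < σ^2 := by positivity
  constructor
  · -- ν side
    have hpdν : ∀ s, 0 ≤ s → IsPD X (nuf s) := fun s hs => (hpdall s hs).1
    have hderiv' : ∀ x s, 0 ≤ s → HasDerivWithinAt (fun u => nuf u x)
        (((-(DFν (nuf s) (muf s) x)) - (σ^2/2) * Real.log (nuf s x / pp x)
          + (σ^2/2) * KL X (nuf s) pp) * nuf s x) (Ici 0) s := by
      intro x s hs
      have h := hdν x s hs
      have heq : (-(aFun X σ pp DFν (nuf s) (muf s) x)) * nuf s x =
          ((-(DFν (nuf s) (muf s) x)) - (σ^2/2) * Real.log (nuf s x / pp x)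
          + (σ^2/2) * KL X (nuf s) pp) * nuf s x := by
        unfold aFun
        ring
      rw [heq] at h
      exact h
    have hG' : ∀ s, 0 ≤ s → ∀ x ∈ X, |(fun (s : ℝ) (x : Euc d) => -(DFν (nuf s) (muf s) x)) s x| ≤ Cν := by
      intro s hs x hx
      simp only [abs_neg]
      exact (hb1 (nuf s) (muf s) (hpdall s hs).1 (hpdall s hs).2).1 x hx
    have hup' : ∀ x ∈ X, nuf 0 x ≤ Rν * pp x := by
      rw [hν0eq]; exact hupν
    have hE : 2*Real.log Rν + 2*Cν/(σ^2/2) ≤ 3 * Real.log Rν + 6 / σ ^ 2 * Cν := by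
      have h1 : 2*Cν/(σ^2/2) = 4/σ^2*Cν := by
        field_simp
        ring
      have h2 : 0 < Real.log Rν := Real.log_pos hRν
      have h3 : 4/σ^2*Cν ≤ 6/σ^2*Cν := by
        apply mul_le_mul_of_nonneg_right _ hCν.le
        exact (div_le_div_iff_of_pos_right hσ2).mpr (by norm_num)
      rw [h1]
      linarith
    exact FRaux.main_flow_bound hl hCν hRν hpp hpdν hcontν hderiv' hG' hup' _ hE t ht.le
  · -- μ side
    have hpdμ : ∀ s, 0 ≤ s → IsPD Y (muf s) := fun s hs => (hpdall s hs).2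
    have hderiv' : ∀ y s, 0 ≤ s → HasDerivWithinAt (fun u => muf u y)
        (((DFμ (nuf s) (muf s) y) - (σ^2/2) * Real.log (muf s y / ρ y)
          + (σ^2/2) * KL Y (muf s) ρ) * muf s y) (Ici 0) s := by
      intro y s hs
      have h := hdμ y s hs
      have heq : (bFun Y σ ρ DFμ (nuf s) (muf s) y) * muf s y =
          ((DFμ (nuf s) (muf s) y) - (σ^2/2) * Real.log (muf s y / ρ y)
          + (σ^2/2) * KL Y (muf s) ρ) * muf s y := by
        unfold bFun
        ring
      rw [heq] at h
      exact h
    have hG' : ∀ s, 0 ≤ s → ∀ y ∈ Y, |(fun (s : ℝ) (y : Euc d) => DFμ (nuf s) (muf s) y) s y| ≤ Cμ := by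
      intro s hs y hy
      exact (hb1 (nuf s) (muf s) (hpdall s hs).1 (hpdall s hs).2).2 y hy
    have hup' : ∀ y ∈ Y, muf 0 y ≤ Rμ * ρ y := by
      rw [hμ0eq]; exact hupμ
    have hE : 2*Real.log Rμ + 2*Cμ/(σ^2/2) ≤ 3 * Real.log Rμ + 6 / σ ^ 2 * Cμ := by
      have h1 : 2*Cμ/(σ^2/2) = 4/σ^2*Cμ := by
        field_simp
        ring
      have h2 : 0 < Real.log Rμ := Real.log_pos hRμ
      have h3 : 4/σ^2*Cμ ≤ 6/σ^2*Cμ := by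
        apply mul_le_mul_of_nonneg_right _ hCμ.le
        exact (div_le_div_iff_of_pos_right hσ2).mpr (by norm_num)
      rw [h1]
      linarith
    exact FRaux.main_flow_bound hl hCμ hRμ hρ hpdμ hcontμ hderiv' hG' hup' _ hE t ht.le
end
end
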